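/- arXiv:1905.11004 — 7 statements merged into one kernel-verified Lean document; each statement's English description precedes it below -/
import Mathlib

section
/- Splitting one part of a composition weakly increases every measure of information and strictly increases the second one: let n_1,...,n_T be positive integers, let t be an index, and let a,b be positive integers with a+b = n_t. Let the new list be obtained from (n_1,...,n_T) by replacing the entry n_t with the two entries a and b. Then for every k ≥ 0, e_k(new list) ≥ e_k(n_1,...,n_T), with e_1 unchanged and e_2(new list) = e_2(n_1,...,n_T) + a·b > e_2(n_1,...,n_T). -/
lemma esymm_cons_succ (x : ℕ) (s : Multiset ℕ) (k : ℕ) :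
    (x ::ₘ s).esymm (k + 1) = s.esymm (k + 1) + x * s.esymm k := by
  simp only [Multiset.esymm, Multiset.powersetCard_cons, Multiset.map_add, Multiset.sum_add,
    Multiset.map_map]
  congr 1
  rw [← Multiset.sum_map_mul_left]
  simp [Function.comp, Multiset.prod_cons]

lemma esymm_cons_zero (x : ℕ) (s : Multiset ℕ) : (x ::ₘ s).esymm 0 = 1 := by
  simp [Multiset.esymm]

lemma esymm_zero' (s : Multiset ℕ) : s.esymm 0 = 1 := by simp [Multiset.esymm]

lemma esymm_cons_one (x : ℕ) (s : Multiset ℕ) :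
    (x ::ₘ s).esymm 1 = s.esymm 1 + x * s.esymm 0 := esymm_cons_succ x s 0

lemma esymm_cons_two (x : ℕ) (s : Multiset ℕ) :
    (x ::ₘ s).esymm 2 = s.esymm 2 + x * s.esymm 1 := esymm_cons_succ x s 1

lemma esymm_le_cons (x : ℕ) (s : Multiset ℕ) (k : ℕ) :
    s.esymm k ≤ (x ::ₘ s).esymm k := by
  cases k with
  | zero => simp [esymm_zero', esymm_cons_zero]
  | succ k => rw [esymm_cons_succ]; exact Nat.le_add_right _ _

/-- Splitting one part of a composition weakly increases every measure of
information (elementary symmetric function) and strictly increases the second one. -/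
theorem stmt_0 (L₁ L₂ : List ℕ) (a b : ℕ) (ha : 0 < a) (hb : 0 < b)
    (hpos : ∀ x ∈ L₁ ++ (a + b) :: L₂, 0 < x) :
    (∀ k : ℕ,
      ((L₁ ++ (a + b) :: L₂ : List ℕ) : Multiset ℕ).esymm k ≤
        ((L₁ ++ a :: b :: L₂ : List ℕ) : Multiset ℕ).esymm k) ∧
    ((L₁ ++ a :: b :: L₂ : List ℕ) : Multiset ℕ).esymm 1 =
      ((L₁ ++ (a + b) :: L₂ : List ℕ) : Multiset ℕ).esymm 1 ∧
    ((L₁ ++ a :: b :: L₂ : List ℕ) : Multiset ℕ).esymm 2 =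
      ((L₁ ++ (a + b) :: L₂ : List ℕ) : Multiset ℕ).esymm 2 + a * b ∧
    ((L₁ ++ (a + b) :: L₂ : List ℕ) : Multiset ℕ).esymm 2 <
      ((L₁ ++ a :: b :: L₂ : List ℕ) : Multiset ℕ).esymm 2 := by
  set M : Multiset ℕ := ((L₁ ++ L₂ : List ℕ) : Multiset ℕ) with hM
  have h1 : ((L₁ ++ (a + b) :: L₂ : List ℕ) : Multiset ℕ) = (a + b) ::ₘ M := by
    rw [hM, Multiset.cons_coe, Multiset.coe_eq_coe]
    exact List.perm_middle
  have h2 : ((L₁ ++ a :: b :: L₂ : List ℕ) : Multiset ℕ) = a ::ₘ b ::ₘ M := by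
    rw [hM, Multiset.cons_coe, Multiset.cons_coe, Multiset.coe_eq_coe]
    exact List.perm_middle.trans (List.Perm.cons a List.perm_middle)
  rw [h1, h2]
  refine ⟨?_, ?_, ?_, ?_⟩
  · intro k
    cases k with
    | zero => simp [esymm_cons_zero]
    | succ k =>
      rw [esymm_cons_succ, esymm_cons_succ, esymm_cons_succ, add_mul]
      nlinarith [esymm_le_cons b M k]
  · simp only [esymm_cons_one, esymm_cons_zero, esymm_zero']
    ring
  · simp only [esymm_cons_two, esymm_cons_one, esymm_zero']
    ring
  · simp only [esymm_cons_two, esymm_cons_one, esymm_zero']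
    nlinarith [ha, hb]
end

section
/- Large-contest minimization of the highest payoff: for every n ≥ 1 and every finite list (n_1,...,n_T) of positive integers with n_1 + ... + n_T = n, one has (1 + n_1)² · ∏_{s=2}^T (1 + n_s) ≤ 9·2^{n−2}, with equality if and only if n_1 = 2 and n_s = 1 for all s ≥ 2 (which requires n ≥ 2). -/
/-!
Since `1 + s ≤ 2 ^ s`, with equality only for `s ≤ 1`, the factors `1 + n_s` with `s ≥ 2`
contribute at most `2 ^ (n_2 + ⋯ + n_T)`. The first factor is weighted by a square, and
`4 (1 + x)² ≤ 9 · 2 ^ x` with equality only at `x = 2`; multiplying the two bounds gives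
`4 (1 + n_1)² ∏_{s ≥ 2} (1 + n_s) ≤ 9 · 2 ^ n`, an equality exactly when both bounds are.
-/

lemma one_add_le_two_pow (x : ℕ) : 1 + x ≤ 2 ^ x := by
  have := Nat.lt_two_pow_self (n := x)
  omega

lemma one_add_eq_two_pow_iff (x : ℕ) : 1 + x = 2 ^ x ↔ x ≤ 1 := by
  refine ⟨fun h => ?_, fun h => by interval_cases x <;> rfl⟩
  by_contra! hx
  -- `x ≤ 2 ^ (x - 1)` doubles to `2 x ≤ 2 ^ x`.
  have hpred := Nat.lt_two_pow_self (n := x - 1)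
  have hsplit : 2 ^ x = 2 * 2 ^ (x - 1) := by
    rw [← pow_succ']
    congr 1
    omega
  omega

lemma four_mul_one_add_sq_lt_nine_mul_two_pow {x : ℕ} (hx : 3 ≤ x) :
    4 * (1 + x) ^ 2 < 9 * 2 ^ x := by
  induction x, hx using Nat.le_induction with
  | base => norm_num
  | succ x hx ih =>
    have hstep : 4 * (1 + (x + 1)) ^ 2 ≤ 2 * (4 * (1 + x) ^ 2) := by nlinarith
    rw [pow_succ 2 x]
    omega

lemma four_mul_one_add_sq_le_nine_mul_two_pow (x : ℕ) : 4 * (1 + x) ^ 2 ≤ 9 * 2 ^ x := by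
  rcases Nat.lt_or_ge x 3 with hx | hx
  · interval_cases x <;> norm_num
  · exact (four_mul_one_add_sq_lt_nine_mul_two_pow hx).le

lemma four_mul_one_add_sq_eq_nine_mul_two_pow_iff (x : ℕ) :
    4 * (1 + x) ^ 2 = 9 * 2 ^ x ↔ x = 2 := by
  rcases Nat.lt_or_ge x 3 with hx | hx
  · interval_cases x <;> norm_num
  · exact iff_of_false (four_mul_one_add_sq_lt_nine_mul_two_pow hx).ne (by omega)

lemma prod_map_one_add_le_two_pow_sum (l : List ℕ) : (l.map (1 + ·)).prod ≤ 2 ^ l.sum := by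
  induction l with
  | nil => simp
  | cons a l ih => simpa [pow_add] using Nat.mul_le_mul (one_add_le_two_pow a) ih

lemma prod_map_one_add_eq_two_pow_sum_iff (l : List ℕ) :
    (l.map (1 + ·)).prod = 2 ^ l.sum ↔ ∀ x ∈ l, x ≤ 1 := by
  induction l with
  | nil => simp
  | cons a l ih =>
    simp only [List.map_cons, List.prod_cons, List.sum_cons, pow_add, List.forall_mem_cons]
    rw [mul_eq_mul_iff_eq_and_eq_of_pos (one_add_le_two_pow a)
      (prod_map_one_add_le_two_pow_sum l) (by omega) (by positivity),
      one_add_eq_two_pow_iff, ih]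

def contestProduct (a : ℕ) (l : List ℕ) : ℕ := (1 + a) ^ 2 * (l.map (1 + ·)).prod

lemma four_mul_contestProduct_le (a : ℕ) (l : List ℕ) :
    4 * contestProduct a l ≤ 9 * 2 ^ (a :: l).sum := by
  rw [contestProduct, List.sum_cons, pow_add, ← mul_assoc, ← mul_assoc]
  exact Nat.mul_le_mul (four_mul_one_add_sq_le_nine_mul_two_pow a)
    (prod_map_one_add_le_two_pow_sum l)

lemma four_mul_contestProduct_eq_iff (a : ℕ) (l : List ℕ) :
    4 * contestProduct a l = 9 * 2 ^ (a :: l).sum ↔ a = 2 ∧ ∀ x ∈ l, x ≤ 1 := by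
  rw [contestProduct, List.sum_cons, pow_add, ← mul_assoc, ← mul_assoc,
    mul_eq_mul_iff_eq_and_eq_of_pos (four_mul_one_add_sq_le_nine_mul_two_pow a)
      (prod_map_one_add_le_two_pow_sum l) (by positivity) (by positivity),
    four_mul_one_add_sq_eq_nine_mul_two_pow_iff, prod_map_one_add_eq_two_pow_sum_iff]

theorem stmt_8_general (n : ℕ) (n1 : ℕ) (rest : List ℕ)
    (hpos : ∀ x ∈ n1 :: rest, 0 < x) (hsum : (n1 :: rest).sum = n) :
    ((1 + n1 : ℝ)) ^ 2 * ((rest.map (fun s => 1 + s)).prod : ℕ) ≤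
      9 * (2 : ℝ) ^ ((n : ℤ) - 2) ∧
    (((1 + n1 : ℝ)) ^ 2 * ((rest.map (fun s => 1 + s)).prod : ℕ) =
        9 * (2 : ℝ) ^ ((n : ℤ) - 2) ↔ (n1 = 2 ∧ ∀ x ∈ rest, x = 1)) := by
  have hlhs : ((1 + n1 : ℝ)) ^ 2 * ((rest.map (fun s => 1 + s)).prod : ℕ) =
      (4 * contestProduct n1 rest : ℕ) / 4 := by
    push_cast [contestProduct]
    ring
  have hrhs : 9 * (2 : ℝ) ^ ((n : ℤ) - 2) = (9 * 2 ^ n : ℕ) / 4 := by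
    rw [zpow_sub₀ two_ne_zero, zpow_natCast]
    push_cast
    ring
  have hrest : (∀ x ∈ rest, x ≤ 1) ↔ ∀ x ∈ rest, x = 1 :=
    forall₂_congr fun x hx => by have := hpos x (List.mem_cons_of_mem n1 hx); omega
  subst hsum
  rw [hlhs, hrhs, div_le_div_iff_of_pos_right four_pos, div_left_inj' four_ne_zero,
    Nat.cast_le, Nat.cast_inj, four_mul_contestProduct_eq_iff, hrest]
  exact ⟨four_mul_contestProduct_le n1 rest, Iff.rfl⟩

/-- Large-contest minimization of the highest payoff:
`(1 + n₁)² · ∏_{s≥2} (1 + n_s) ≤ 9·2^{n−2}`, with equality iff `n₁ = 2` and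
all remaining parts equal `1`. -/
theorem stmt_8 (n : ℕ) (hn : 1 ≤ n) (n1 : ℕ) (rest : List ℕ)
    (hpos : ∀ x ∈ n1 :: rest, 0 < x) (hsum : (n1 :: rest).sum = n) :
    ((1 + n1 : ℝ)) ^ 2 * ((rest.map (fun s => 1 + s)).prod : ℕ) ≤
      9 * (2 : ℝ) ^ ((n : ℤ) - 2) ∧
    (((1 + n1 : ℝ)) ^ 2 * ((rest.map (fun s => 1 + s)).prod : ℕ) =
        9 * (2 : ℝ) ^ ((n : ℤ) - 2) ↔ (n1 = 2 ∧ ∀ x ∈ rest, x = 1)) :=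
  stmt_8_general n n1 rest hpos hsum
end

section
/- Large-contest maximization of payoff inequality: let m ≥ 1 and let (n_1,...,n_T) be positive integers with n_1 + ... + n_T = m, and set P = ∏_{s=1}^T (1 + n_s). Then (1/P)·(1 − 1/P) ≤ m/(m+1)², with equality if and only if T = 1. -/
lemma aux_ge (L : List ℕ) : L.sum + 1 ≤ (L.map (fun s => 1 + s)).prod := by
  induction L with
  | nil => simp
  | cons a l ih =>
    simp only [List.sum_cons, List.map_cons, List.prod_cons]
    calc a + l.sum + 1 ≤ (1 + a) * (l.sum + 1) := by
          rw [show (1+a)*(l.sum+1) = a*l.sum + (a+l.sum+1) from by ring]; omega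
    _ ≤ (1 + a) * (l.map (fun s => 1 + s)).prod := Nat.mul_le_mul_left _ ih

lemma aux_gt (a b : ℕ) (t : List ℕ) (hpos : ∀ x ∈ a :: b :: t, 0 < x) :
    (a :: b :: t).sum + 1 < ((a :: b :: t).map (fun s => 1 + s)).prod := by
  have ha : 0 < a := hpos a (by simp)
  have hb : 0 < b := hpos b (by simp)
  have hs : 0 < (b :: t).sum := by simp; omega
  have h1 := aux_ge (b :: t)
  simp only [List.sum_cons, List.map_cons, List.prod_cons] at *
  calc a + (b + t.sum) + 1 < (1 + a) * (b + t.sum + 1) := by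
        rw [show (1+a)*(b+t.sum+1) = a*(b+t.sum) + (a+(b+t.sum)+1) from by ring]
        have : 0 < a*(b+t.sum) := Nat.mul_pos ha (by omega)
        omega
  _ ≤ (1 + a) * ((1 + b) * (t.map (fun s => 1 + s)).prod) := Nat.mul_le_mul_left _ h1

/-- Large-contest maximization of payoff inequality:
`(1/P)(1 − 1/P) ≤ m/(m+1)²`, with equality iff the composition has one part. -/
theorem stmt_9 (m : ℕ) (hm : 1 ≤ m) (L : List ℕ) (hpos : ∀ x ∈ L, 0 < x)
    (hsum : L.sum = m) (P : ℝ) (hP : P = ((L.map (fun s => 1 + s)).prod : ℕ)) :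
    (1 / P) * (1 - 1 / P) ≤ m / (m + 1) ^ 2 ∧
    ((1 / P) * (1 - 1 / P) = m / (m + 1) ^ 2 ↔ L.length = 1) := by
  have hge : m + 1 ≤ (L.map (fun s => 1 + s)).prod := hsum ▸ aux_ge L
  have hPge : (m : ℝ) + 1 ≤ P := by
    rw [hP]; exact_mod_cast hge
  have hm1 : (2 : ℝ) ≤ (m : ℝ) + 1 := by exact_mod_cast Nat.succ_le_succ hm
  have hP2 : (2 : ℝ) ≤ P := le_trans hm1 hPge
  have hP0 : (0 : ℝ) < P := by linarith
  have hm0 : (0 : ℝ) < (m : ℝ) + 1 := by linarith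
  have hx : (m : ℝ) / (m + 1) ^ 2 = (1 / (m + 1)) * (1 - 1 / (m + 1)) := by
    have h : ((m:ℝ)+1) ≠ 0 := by positivity
    field_simp
    ring_nf
  have hyx : 1 / P ≤ 1 / ((m : ℝ) + 1) := one_div_le_one_div_of_le hm0 hPge
  have hxh : 1 / ((m : ℝ) + 1) ≤ 1 / 2 := one_div_le_one_div_of_le (by norm_num) hm1
  have hyh : 1 / P ≤ 1 / 2 := le_trans hyx hxh
  constructor
  · rw [hx]; nlinarith [mul_nonneg (sub_nonneg.2 hyx) (by linarith : (0:ℝ) ≤ 1 - 1/((m:ℝ)+1) - 1/P)]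
  · constructor
    · intro heq
      by_contra hne
      have hgt : m + 1 < (L.map (fun s => 1 + s)).prod := by
        match L with
        | [] => simp at hsum; omega
        | [a] => exact absurd rfl hne
        | a :: b :: t => exact hsum ▸ aux_gt a b t hpos
      have hPgt : (m : ℝ) + 1 < P := by rw [hP]; exact_mod_cast hgt
      have hyx' : 1 / P < 1 / ((m : ℝ) + 1) := one_div_lt_one_div_of_lt hm0 hPgt
      rw [hx] at heq
      nlinarith [mul_pos (sub_pos.2 hyx') (by linarith : (0:ℝ) < 1 - 1/((m:ℝ)+1) - 1/P)]
    · intro h1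
      match L, h1 with
      | [a], _ =>
        have : a = m := by simpa using hsum
        subst this
        rw [hP]; push_cast; rw [hx]
        simp [add_comm]
end

section
/- Threshold for the corner comparison: let n > 1 be real and set ī = −1/2 + √(n + 5/4). Then 1 < ī < n, and for every real i with 1 ≤ i ≤ n, the inequality (1 + i)²(1 + n − i) ≤ (1 + n)² holds if and only if i ≤ ī or i = n. Moreover, the solution set of (1 + i)²(1 + n − i) = (1 + n)² in the real variable i is exactly {n, −1/2 + √(n + 5/4), −1/2 − √(n + 5/4)}. -/
/-- Threshold for the corner comparison in maximizing the i-th highest payoff. -/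
theorem stmt_11 (n : ℝ) (hn : 1 < n) (ibar : ℝ)
    (hibar : ibar = -1/2 + Real.sqrt (n + 5/4)) :
    1 < ibar ∧ ibar < n ∧
    (∀ i : ℝ, 1 ≤ i → i ≤ n →
      ((1 + i) ^ 2 * (1 + n - i) ≤ (1 + n) ^ 2 ↔ (i ≤ ibar ∨ i = n))) ∧
    {i : ℝ | (1 + i) ^ 2 * (1 + n - i) = (1 + n) ^ 2} =
      {n, -1/2 + Real.sqrt (n + 5/4), -1/2 - Real.sqrt (n + 5/4)} := by
  set s := Real.sqrt (n + 5/4) with hsdef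
  have hs2 : s ^ 2 = n + 5/4 := Real.sq_sqrt (by linarith)
  have hs0 : 0 ≤ s := Real.sqrt_nonneg _
  have hs32 : 3/2 < s := by nlinarith
  have hfact : ∀ i : ℝ, (1 + i) ^ 2 * (1 + n - i) - (1 + n) ^ 2 =
      (n - i) * (i - (-1/2 + s)) * (i - (-1/2 - s)) := by
    intro i
    linear_combination (n - i) * hs2
  have h1 : 1 < ibar := by rw [hibar]; linarith
  have h2 : ibar < n := by rw [hibar]; nlinarith
  refine ⟨h1, h2, ?_, ?_⟩
  · intro i hi1 hin
    have h3 : 0 < i - (-1/2 - s) := by linarith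
    constructor
    · intro h
      have hf := hfact i
      rcases eq_or_lt_of_le hin with h' | h'
      · exact Or.inr h'
      · left
        by_contra hc
        push_neg at hc
        rw [hibar] at hc
        have hp : 0 < (n - i) * (i - (-1/2 + s)) * (i - (-1/2 - s)) :=
          mul_pos (mul_pos (by linarith) (by linarith)) h3
        linarith
    · rintro (h | h)
      · rw [hibar] at h
        have h4 : (n - i) * (i - (-1/2 + s)) ≤ 0 :=
          mul_nonpos_of_nonneg_of_nonpos (by linarith) (by linarith)
        have h5 : (n - i) * (i - (-1/2 + s)) * (i - (-1/2 - s)) ≤ 0 :=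
          mul_nonpos_of_nonpos_of_nonneg h4 (le_of_lt h3)
        linarith [hfact i]
      · subst h
        have h5 : (i - i) * (i - (-1/2 + s)) * (i - (-1/2 - s)) = 0 := by ring
        linarith [hfact i]
  · ext i
    simp only [Set.mem_setOf_eq, Set.mem_insert_iff, Set.mem_singleton_iff]
    constructor
    · intro h
      have hf := hfact i
      have : (n - i) * (i - (-1/2 + s)) * (i - (-1/2 - s)) = 0 := by linarith
      rcases mul_eq_zero.mp this with h' | h'
      · rcases mul_eq_zero.mp h' with h'' | h''
        · left; linarith
        · right; left; linarith
      · right; right; linarith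
    · rintro (h | h | h) <;> subst h
      · have h5 : (i - i) * (i - (-1/2 + s)) * (i - (-1/2 - s)) = 0 := by ring
        linarith [hfact i]
      · have h5 : (n - (-1/2 + s)) * ((-1/2 + s) - (-1/2 + s)) * ((-1/2 + s) - (-1/2 - s)) = 0 := by ring
        linarith [hfact (-1/2 + s)]
      · have h5 : (n - (-1/2 - s)) * ((-1/2 - s) - (-1/2 + s)) * ((-1/2 - s) - (-1/2 - s)) = 0 := by ring
        linarith [hfact (-1/2 - s)]
end

section
/- Uniqueness of equilibrium in the simultaneous Tullock contest: let n ≥ 2 and consider the n-player game in which each player i chooses x_i ≥ 0 and, whenever Σ_j x_j > 0, receives payoff u_i(x) = x_i/(Σ_j x_j) − x_i. If a profile x with Σ_j x_j > 0 is a Nash equilibrium (no player can increase her payoff by a unilateral deviation to any y ≥ 0), then x_i = (n−1)/n² for every player i. -/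
/-- Per-player best-response characterization for the Tullock contest:
if `(y - x) * (s - (y+s)(x+s)) ≤ 0` for all `y ≥ 0`, then either `x = 0`
and `s ≥ 1`, or `x > 0` and `s = (x+s)²`. -/
lemma tullock_key (s x : ℝ) (hs : 0 < s) (hx : 0 ≤ x)
    (h : ∀ y : ℝ, 0 ≤ y → (y - x) * (s - (y + s) * (x + s)) ≤ 0) :
    (x = 0 ∧ 1 ≤ s) ∨ (0 < x ∧ s = (x + s) ^ 2) := by
  rcases hx.eq_or_lt with he | hp
  · left
    refine ⟨he.symm, ?_⟩
    by_contra hc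
    push_neg at hc
    have hy := h ((1 - s) / 2) (by linarith)
    rw [← he] at hy
    nlinarith [hy, mul_pos hs (show (0:ℝ) < (1 - s) * (1 - s) by nlinarith)]
  · right
    refine ⟨hp, ?_⟩
    have hXpos : 0 < x + s := by linarith
    by_contra hne
    rcases lt_or_gt_of_ne hne with hlt | hgt
    · -- s < (x+s)²
      have ht : s / (x + s) - s < x := by
        have h2 : s / (x + s) < x + s := (div_lt_iff₀ hXpos).2 (by nlinarith)
        linarith
      set y := (x + max (s / (x + s) - s) 0) / 2 with hydef
      have hy0 : 0 ≤ y := by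
        have := le_max_right (s / (x + s) - s) 0
        rw [hydef]; linarith
      have hyx : y < x := by
        have := max_lt ht hp
        rw [hydef]; linarith
      have hyt : s / (x + s) - s < y := by
        have := le_max_left (s / (x + s) - s) 0
        rw [hydef]; linarith
      have hst : s < (y + s) * (x + s) := by
        have h2 : s / (x + s) < y + s := by linarith
        exact (div_lt_iff₀ hXpos).1 h2
      have hkey := h y hy0
      nlinarith [mul_pos (show (0:ℝ) < x - y by linarith)
        (show (0:ℝ) < (y + s) * (x + s) - s by linarith)]
    · -- s > (x+s)²
      have ht : x < s / (x + s) - s := by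
        have h2 : x + s < s / (x + s) := (lt_div_iff₀ hXpos).2 (by nlinarith)
        linarith
      set y := (x + (s / (x + s) - s)) / 2 with hydef
      have hy0 : 0 ≤ y := by rw [hydef]; linarith
      have hyx : x < y := by rw [hydef]; linarith
      have hyt : y < s / (x + s) - s := by rw [hydef]; linarith
      have hst : (y + s) * (x + s) < s := by
        have h2 : y + s < s / (x + s) := by linarith
        exact (lt_div_iff₀ hXpos).1 h2
      have hkey := h y hy0
      nlinarith [mul_pos (show (0:ℝ) < y - x by linarith)
        (show (0:ℝ) < s - (y + s) * (x + s) by linarith)]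

/-- Uniqueness of equilibrium in the simultaneous Tullock contest: any Nash
equilibrium profile with positive total effort has `x_i = (n−1)/n²` for all i. -/
theorem stmt_13 (n : ℕ) (hn : 2 ≤ n) (x : Fin n → ℝ) (hx : ∀ i, 0 ≤ x i)
    (hX : 0 < ∑ j, x j)
    (hNE : ∀ i : Fin n, ∀ y : ℝ, 0 ≤ y → 0 < y + ((∑ j, x j) - x i) →
      y / (y + ((∑ j, x j) - x i)) - y ≤ x i / (∑ j, x j) - x i) :
    ∀ i : Fin n, x i = ((n : ℝ) - 1) / n ^ 2 := by
  set S := ∑ j, x j with hSdef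
  have hle : ∀ i, x i ≤ S := fun i =>
    Finset.single_le_sum (fun j _ => hx j) (Finset.mem_univ i)
  -- no player holds the full effort
  have hslt : ∀ i, x i < S := by
    intro i
    rcases (hle i).lt_or_eq with h | h
    · exact h
    · exfalso
      have h0 : S - x i = 0 := by rw [h]; ring
      have := hNE i (S / 2) (by linarith) (by rw [h0]; linarith)
      rw [h0, h] at this
      have hS2 : (0:ℝ) < S / 2 := by linarith
      rw [add_zero, div_self (ne_of_gt hS2), div_self (ne_of_gt hX)] at this
      linarith
  -- rewritten equilibrium condition
  have key : ∀ i, ∀ y : ℝ, 0 ≤ y →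
      (y - x i) * ((S - x i) - (y + (S - x i)) * S) ≤ 0 := by
    intro i y hy
    have hs : 0 < S - x i := by have := hslt i; linarith
    have hA : 0 < y + (S - x i) := by linarith
    have hne := hNE i y hy hA
    have ha : y / (y + (S - x i)) * (y + (S - x i)) = y :=
      div_mul_cancel₀ _ (ne_of_gt hA)
    have hb : x i / S * S = x i := div_mul_cancel₀ _ (ne_of_gt hX)
    nlinarith [mul_le_mul_of_nonneg_right hne (le_of_lt (mul_pos hA hX)),
      mul_pos hA hX]
  -- per-player characterization
  have hcase : ∀ i, (x i = 0 ∧ 1 ≤ S) ∨ (0 < x i ∧ S - x i = S ^ 2) := by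
    intro i
    have hs : 0 < S - x i := by have := hslt i; linarith
    have hxs : x i + (S - x i) = S := by ring
    have := tullock_key (S - x i) (x i) hs (hx i) (by
      intro y hy
      have := key i y hy
      nlinarith [this])
    rcases this with ⟨h1, h2⟩ | ⟨h1, h2⟩
    · exact Or.inl ⟨h1, by linarith⟩
    · exact Or.inr ⟨h1, by rw [hxs] at h2; exact h2⟩
  -- total effort is below 1
  have hS1 : S < 1 := by
    by_contra hc
    push_neg at hc
    have hz : ∀ i, x i = 0 := by
      intro i
      rcases hcase i with ⟨h1, _⟩ | ⟨h1, h2⟩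
      · exact h1
      · nlinarith
    have : S = 0 := by
      rw [hSdef]
      exact Finset.sum_eq_zero fun i _ => hz i
    linarith
  -- each player's effort equals S - S²
  have hxe : ∀ i, x i = S - S ^ 2 := by
    intro i
    rcases hcase i with ⟨_, h2⟩ | ⟨_, h2⟩
    · linarith
    · linarith
  -- sum up
  have hsum : S = (n : ℝ) * (S - S ^ 2) := by
    calc S = ∑ _j : Fin n, (S - S ^ 2) := by
          rw [hSdef]; exact Finset.sum_congr rfl fun i _ => hxe i
      _ = (n : ℝ) * (S - S ^ 2) := by
          rw [Finset.sum_const, Finset.card_univ, Fintype.card_fin, nsmul_eq_mul]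
  have hn0 : (0:ℝ) < n := by positivity
  have hn1 : (1:ℝ) ≤ n := by exact_mod_cast Nat.one_le_of_lt hn
  -- 1 = n (1 - S)
  have h1 : 1 = (n : ℝ) * (1 - S) := by
    have := hsum
    have hS0 : S ≠ 0 := ne_of_gt hX
    field_simp at this ⊢
    nlinarith [this]
  have hSval : S = ((n : ℝ) - 1) / n := by
    field_simp
    nlinarith [h1]
  intro i
  rw [hxe i, hSval]
  field_simp
  ring
end

section
/- Follower-stage equilibrium of the three-player first-mover Tullock contest: fix a leader effort t with 0 ≤ t < 1 and set X(t) = (1 + √(1 + 8t))/4 and y*(t) = X(t) − X(t)². Then y*(t) > 0 for t < 1 (and y*(t) ≥ 0 for t ≤ 1), X(t) satisfies 2X(t)² − X(t) = t, and the symmetric pair (y*(t), y*(t)) is a Nash equilibrium of the two-player follower game in which a follower choosing y ≥ 0 against opponent effort y′ ≥ 0 receives payoff y/(t + y + y′) − y: for every y ≥ 0, y/(t + y + y*(t)) − y ≤ y*(t)/(t + 2y*(t)) − y*(t). -/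
/-!
Write `X` for the larger root of `2X² - X = t`. Against an opponent playing `y* = X - X²`, a
follower facing `y` pays `y / (X² + y) - y`, since `t + y* = X²`. With `z = X² + y` this is
`1 + X² - (X²/z + z)`, and AM-GM bounds `X²/z + z` below by `2X`, with equality at `z = X`, i.e.
at `y = y*`. So `y*` is a best response to itself, with payoff `(1 - X)²`; it is positive exactly
when `X < 1`, i.e. `t < 1`.
-/

open Real

lemma div_add_sub_le_one_sub_sq {a y : ℝ} (h : 0 < a ^ 2 + y) :
    y / (a ^ 2 + y) - y ≤ (1 - a) ^ 2 := by
  rw [div_sub' h.ne', div_le_iff₀ h]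
  nlinarith [sq_nonneg (a ^ 2 + y - a)]

lemma sub_sq_div_self_sub_sub_sq {a : ℝ} (ha : a ≠ 0) :
    (a - a ^ 2) / a - (a - a ^ 2) = (1 - a) ^ 2 := by
  field_simp

lemma two_mul_sq_sub_self_of_sqrt {t : ℝ} (ht : 0 ≤ 1 + 8 * t) :
    2 * ((1 + √(1 + 8 * t)) / 4) ^ 2 - (1 + √(1 + 8 * t)) / 4 = t := by
  nlinarith [sq_sqrt ht]

lemma one_add_sqrt_div_four_lt_one {t : ℝ} (ht : t < 1) : (1 + √(1 + 8 * t)) / 4 < 1 := by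
  have : √(1 + 8 * t) < 3 := (sqrt_lt' (by norm_num)).2 (by linarith)
  linarith

/-- Follower-stage equilibrium of the three-player first-mover Tullock contest. -/
theorem stmt_14 (t : ℝ) (ht0 : 0 ≤ t) (ht1 : t < 1)
    (X : ℝ) (hX : X = (1 + Real.sqrt (1 + 8 * t)) / 4)
    (ystar : ℝ) (hy : ystar = X - X ^ 2) :
    0 < ystar ∧ 2 * X ^ 2 - X = t ∧
    ∀ y : ℝ, 0 ≤ y →
      y / (t + y + ystar) - y ≤ ystar / (t + 2 * ystar) - ystar := by
  have hXt : 2 * X ^ 2 - X = t := hX ▸ two_mul_sq_sub_self_of_sqrt (by linarith)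
  have hX0 : 0 < X := by rw [hX]; positivity
  have hX1 : X < 1 := hX ▸ one_add_sqrt_div_four_lt_one ht1
  subst hy
  refine ⟨by nlinarith, hXt, fun y hy0 => ?_⟩
  have hden : t + y + (X - X ^ 2) = X ^ 2 + y := by linarith
  have hden' : t + 2 * (X - X ^ 2) = X := by linarith
  rw [hden, hden', sub_sq_div_self_sub_sub_sq hX0.ne']
  exact div_add_sub_le_one_sub_sq (by positivity)
end

section
/- Leader optimality in the three-player first-mover Tullock contest: define X(t) = (1 + √(1 + 8t))/4 for t ≥ 0 and let φ(t) = t·(1/X(t) − 1) be the leader's payoff when followers play their subgame equilibrium total X(t). Then φ(t) ≤ 1/8 for all t ≥ 0, with equality if and only if t = 3/8; at the optimum, X(3/8) = 3/4, so the total equilibrium effort of the contest (1,2) is 3/4 and the leader's effort is 3/8. -/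
/-- Leader optimality in the three-player first-mover Tullock contest:
the leader's payoff `φ(t) = t(1/X(t) − 1)` is at most `1/8`, with equality
iff `t = 3/8`, and the total equilibrium effort is `X(3/8) = 3/4`. -/
theorem stmt_15 (X : ℝ → ℝ) (hX : ∀ t, X t = (1 + Real.sqrt (1 + 8 * t)) / 4)
    (φ : ℝ → ℝ) (hφ : φ = fun t => t * (1 / X t - 1)) :
    (∀ t : ℝ, 0 ≤ t → φ t ≤ 1 / 8) ∧
    (∀ t : ℝ, 0 ≤ t → (φ t = 1 / 8 ↔ t = 3 / 8)) ∧
    X (3 / 8) = 3 / 4 := by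
  subst hφ
  have sqrt4 : Real.sqrt 4 = 2 := by
    rw [show (4:ℝ) = 2^2 by norm_num, Real.sqrt_sq (by norm_num)]
  have key : ∀ t : ℝ, 0 ≤ t →
      t * (1 / X t - 1) = 1/8 - (Real.sqrt (1 + 8*t) - 2)^2 / 8 := by
    intro t ht
    have hs2 : Real.sqrt (1 + 8*t) ^ 2 = 1 + 8*t := Real.sq_sqrt (by linarith)
    have hs0 : (0:ℝ) ≤ Real.sqrt (1 + 8*t) := Real.sqrt_nonneg _
    rw [hX]
    set s := Real.sqrt (1 + 8*t) with hsdef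
    have ht' : t = (s^2 - 1) / 8 := by linarith
    have hpos : (1 + s) / 4 ≠ 0 := by positivity
    rw [ht']
    field_simp
    ring
  refine ⟨?_, ?_, ?_⟩
  · intro t ht
    show t * (1 / X t - 1) ≤ 1/8
    rw [key t ht]
    nlinarith [sq_nonneg (Real.sqrt (1 + 8*t) - 2)]
  · intro t ht
    show t * (1 / X t - 1) = 1/8 ↔ _
    rw [key t ht]
    constructor
    · intro h
      have hsq : (Real.sqrt (1 + 8*t) - 2)^2 = 0 := by linarith
      have hs : Real.sqrt (1 + 8*t) = 2 := by
        have := pow_eq_zero_iff (n := 2) (by norm_num) |>.mp hsq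
        linarith
      have hs2 : Real.sqrt (1 + 8*t) ^ 2 = 1 + 8*t := Real.sq_sqrt (by linarith)
      rw [hs] at hs2
      nlinarith
    · intro h
      subst h
      rw [show (1:ℝ) + 8 * (3/8) = 4 by norm_num, sqrt4]
      norm_num
  · rw [hX, show (1:ℝ) + 8 * (3/8) = 4 by norm_num, sqrt4]
    norm_num
end
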